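/- Let P be a finite poset such that for every x \in P the subposet {y \in P : y \ge x} is pure. Then for every v \in T(P) there exists v_0 \in T(P) with v_0(-\infty) = rank \hat{P} and v \ge v_0 in the partial order of T(P); consequently every minimal element v of the poset T(P) satisfies v(-\infty) = rank \hat{P}. (This is Miyazaki's sufficient condition for the Hibi ring R[I(P)] to be level, since R[I(P)] is level iff all minimal elements of T(P) take the value rank \hat{P} at -\infty.) -/

import Mathlib

open Classical

/-- `Hat P` is the poset `P` with a new least element `-∞ = ⊥` and a new
greatest element `∞ = ⊤` adjoined. -/
abbrev Hat (P : Type*) := WithBot (WithTop P)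

/-- The canonical inclusion of `P` into `Hat P`. -/
def toHat {P : Type*} (x : P) : Hat P := ((x : WithTop P) : WithBot (WithTop P))

/-- The rank of a poset: the maximal length (number of covering steps) of a
chain, encoded as the maximal `n` admitting a strictly increasing sequence of
`n + 1` elements. -/
noncomputable def rankN (Q : Type*) [Preorder Q] : ℕ :=
  sSup {n : ℕ | ∃ f : Fin (n + 1) → Q, StrictMono f}

/-- The height of `x` in a poset `Q`: the rank of the subposet `{y | y ≤ x}`. -/
noncomputable def heightN {Q : Type*} [Preorder Q] (x : Q) : ℕ :=
  sSup {n : ℕ | ∃ f : Fin (n + 1) → Q, StrictMono f ∧ ∀ i, f i ≤ x}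

/-- The depth of `x` in a poset `Q`: the rank of the subposet `{y | x ≤ y}`. -/
noncomputable def depthN {Q : Type*} [Preorder Q] (x : Q) : ℕ :=
  sSup {n : ℕ | ∃ f : Fin (n + 1) → Q, StrictMono f ∧ ∀ i, x ≤ f i}

/-- `v` belongs to `S(P)`: `v : Hat P → ℕ` is order-reversing with `v ∞ = 0`. -/
def memS (P : Type*) [PartialOrder P] (v : Hat P → ℕ) : Prop :=
  v ⊤ = 0 ∧ ∀ p q : Hat P, p ≤ q → v q ≤ v p

/-- `v` belongs to `T(P)`: `v : Hat P → ℕ` is strictly order-reversing with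
`v ∞ = 0`. -/
def memT (P : Type*) [PartialOrder P] (v : Hat P → ℕ) : Prop :=
  v ⊤ = 0 ∧ ∀ p q : Hat P, p < q → v q < v p

/-- The partial order of `T(P)`: `v ≥ w` iff `v` dominates `w` pointwise and the
pointwise difference `v - w` is order-reversing. -/
def Tge (P : Type*) [PartialOrder P] (v w : Hat P → ℕ) : Prop :=
  (∀ p : Hat P, w p ≤ v p) ∧ ∀ p q : Hat P, p ≤ q → v q - w q ≤ v p - w p

/-- `v` is a minimal element of the poset `T(P)`. -/
def IsMinT (P : Type*) [PartialOrder P] (v : Hat P → ℕ) : Prop :=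
  memT P v ∧ ∀ w : Hat P → ℕ, memT P w → Tge P v w → w = v

/-- A poset is pure if all its maximal chains have the same length, equivalently
the same cardinality. -/
def IsPure (P : Type*) [PartialOrder P] : Prop :=
  ∀ C D : Set P, IsMaxChain (· ≤ ·) C → IsMaxChain (· ≤ ·) D → C.ncard = D.ncard

/-!
Let `d` be the depth function on `Hat P` (the length of a longest chain starting at a point).
Then `d ∈ T(P)` and `d ≤ v` for every `v ∈ T(P)`. Purity of the upper sets of `P` makes
`v - d` order-reversing away from `-∞`: for `x ≤ y` in `P`, a maximal chain of `{z ≥ x}`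
through `y` is a longest one by purity, and its part between `x` and `y` has length at most
`v x - v y`. Hence `v₀ = max d (v - c)` with `c = v(-∞) - d(-∞)` lies in `T(P)`, has
`v₀(-∞) = d(-∞) = rank (Hat P)`, and `v - v₀ = min (v - d) c` is order-reversing.
-/

open Order

namespace IsChain

variable {α : Type*} [PartialOrder α] {t : Set α}

lemma exists_ltSeries_range_eq (ht : IsChain (· ≤ ·) t) (hfin : t.Finite) (hne : t.Nonempty) :
    ∃ p : LTSeries α, Set.range p = t ∧ p.length + 1 = t.ncard := by
  let := ht.linearOrder
  have := hfin.fintype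
  have := hne.to_subtype
  obtain ⟨n, hn⟩ := Nat.exists_eq_succ_of_ne_zero (Fintype.card_ne_zero (α := t))
  let e := Fintype.orderIsoFinOfCardEq t hn
  refine ⟨LTSeries.mk n (fun i ↦ (e i : α)) fun i j h ↦ e.strictMono h, ?_, ?_⟩
  · change Set.range (Subtype.val ∘ e) = t
    rw [Set.range_comp, e.surjective.range_eq, Set.image_univ, Subtype.range_coe]
  · rw [Set.ncard_eq_toFinset_card', Set.toFinset_card, hn]; rfl

variable [Finite α]

lemma ncard_le_height_add_coheight_add_one (ht : IsChain (· ≤ ·) t) {y : α} (hy : y ∈ t) :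
    (t.ncard : ℕ∞) ≤ height y + coheight y + 1 := by
  obtain ⟨p, hp, hp_len⟩ := (ht.mono (Set.sep_subset t (· ≤ y))).exists_ltSeries_range_eq
    (Set.toFinite _) ⟨y, hy, le_rfl⟩
  obtain ⟨q, hq, hq_len⟩ := (ht.mono (Set.sep_subset t (y ≤ ·))).exists_ltSeries_range_eq
    (Set.toFinite _) ⟨y, hy, le_rfl⟩
  have hp_last : p.last ∈ {z ∈ t | z ≤ y} := hp ▸ Set.mem_range_self _
  have hq_head : q.head ∈ {z ∈ t | y ≤ z} := hq ▸ Set.mem_range_self _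
  have hsplit : t.ncard + 1 = {z ∈ t | z ≤ y}.ncard + {z ∈ t | y ≤ z}.ncard := by
    have hunion : {z ∈ t | z ≤ y} ∪ {z ∈ t | y ≤ z} = t := by
      ext z
      refine ⟨fun h ↦ h.elim And.left And.left, fun hz ↦ ?_⟩
      exact (ht.total hz hy).imp (And.intro hz) (And.intro hz)
    have hinter : {z ∈ t | z ≤ y} ∩ {z ∈ t | y ≤ z} = {y} := by
      ext z
      simp only [Set.mem_inter_iff, Set.mem_ofPred_eq, Set.mem_singleton_iff]
      refine ⟨fun h ↦ le_antisymm h.1.2 h.2.2, ?_⟩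
      rintro rfl
      exact ⟨⟨hy, le_rfl⟩, hy, le_rfl⟩
    rw [← Set.ncard_union_add_ncard_inter _ _ (Set.toFinite _) (Set.toFinite _), hunion, hinter,
      Set.ncard_singleton]
  have : t.ncard ≤ p.length + q.length + 1 := by omega
  calc (t.ncard : ℕ∞) ≤ p.length + q.length + 1 := by exact_mod_cast this
    _ ≤ height y + coheight y + 1 := by
      gcongr
      · exact length_le_height hp_last.2
      · exact length_le_coheight hq_head.2

end IsChain

lemma IsPure.krullDim_le_height_add_coheight {Q : Type*} [PartialOrder Q] [Finite Q]
    (hQ : IsPure Q) (y : Q) : krullDim Q ≤ height y + coheight y := by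
  obtain ⟨C, hC, hyC⟩ := (IsChain.singleton (r := (· ≤ ·)) (a := y)).exists_maxChain
  refine iSup_le fun p ↦ ?_
  obtain ⟨D, hD, hpD⟩ := p.monotone.isChain_range.exists_maxChain
  have hp : p.length + 1 ≤ D.ncard := by
    calc p.length + 1 = (Set.range p).ncard := by
          rw [Set.ncard_range_of_injective p.strictMono.injective, Nat.card_fin]
      _ ≤ D.ncard := Set.ncard_le_ncard hpD
  have hp_le : (p.length : ℕ∞) + 1 ≤ height y + coheight y + 1 :=
    le_trans (by exact_mod_cast hQ D C hD hC ▸ hp)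
      (hC.1.ncard_le_height_add_coheight_add_one (hyC rfl))
  exact_mod_cast (ENat.add_le_add_iff_right ENat.one_ne_top).1 hp_le

section StrictAnti

variable {α : Type*} [PartialOrder α] {v : α → ℕ}

lemma LTSeries.last_add_length_le_head (hv : StrictAnti v) (p : LTSeries α) :
    v p.last + p.length ≤ v p.head := by
  have key : ∀ (i : ℕ) (hi : i < p.length + 1), v (p ⟨i, hi⟩) + i ≤ v p.head := by
    intro i
    induction i with
    | zero => intro _; rfl
    | succ i ih =>
      intro hi
      have := hv <| p.strictMono
        (show (⟨i, by omega⟩ : Fin _) < ⟨i + 1, hi⟩ from i.lt_succ_self)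
      have := ih (by omega)
      omega
  exact key _ _

lemma Order.coheight_le_of_strictAnti (hv : StrictAnti v) (x : α) : coheight x ≤ v x :=
  coheight_le fun p hp ↦ by
    have := p.last_add_length_le_head hv
    rw [hp] at this
    exact_mod_cast (by omega : p.length ≤ v x)

lemma Order.height_add_le_of_strictAnti (hv : StrictAnti v) {a : α} (ha : IsBot a) (b : α) :
    height b + v b ≤ v a := by
  have hle : height b ≤ (v a - v b : ℕ) := height_le_iff.2 fun p hp ↦ by
    have := p.last_add_length_le_head hv
    have := hv.antitone hp
    have := hv.antitone (ha p.head)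
    exact_mod_cast (by omega : p.length ≤ v a - v b)
  calc height b + v b ≤ (v a - v b : ℕ) + v b := by gcongr
    _ = v a := by rw [← Nat.cast_add, Nat.sub_add_cancel (hv.antitone (ha b))]

end StrictAnti

section Depth

variable {α : Type*} [PartialOrder α]

lemma Order.coheight_lt_top_of_finite [Finite α] (x : α) : coheight x < ⊤ := by
  have := Fintype.ofFinite α
  refine lt_of_le_of_lt (coheight_le (n := Fintype.card α) fun p _ ↦ ?_)
    (ENat.natCast_lt_top _)
  exact_mod_cast p.length_lt_card.le

lemma depthN_eq_coheight [Finite α] (x : α) : (depthN x : ℕ∞) = coheight x := by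
  obtain ⟨m, hm⟩ := ENat.ne_top_iff_exists.1 (coheight_lt_top_of_finite x).ne
  have hS :
      {n : ℕ | ∃ f : Fin (n + 1) → α, StrictMono f ∧ ∀ i, x ≤ f i} = Set.Iic m := by
    ext n
    refine ⟨fun ⟨f, hf, hx⟩ ↦ ?_, fun hn ↦ ?_⟩
    · exact_mod_cast hm ▸ length_le_coheight (p := LTSeries.mk n f hf) (hx 0)
    · obtain ⟨p, rfl, rfl⟩ :=
        exists_series_of_le_coheight x (n := n) (hm ▸ by exact_mod_cast hn)
      exact ⟨p, p.strictMono, p.head_le⟩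
  rw [depthN, hS, csSup_Iic, hm]

lemma rankN_eq_depthN_bot [OrderBot α] : rankN α = depthN (⊥ : α) := by
  simp [rankN, depthN]

end Depth

lemma coheight_add_le_of_isPure {P : Type*} [PartialOrder P] [Finite P] {x y : P}
    (hx : IsPure {z : P // x ≤ z}) (hxy : x ≤ y) {w : P → ℕ} (hw : StrictAnti w) :
    coheight x + w y ≤ w x + coheight y := by
  have hcoheight (z : {z : P // x ≤ z}) : coheight z = coheight z.1 :=
    coheight_eq_of_strictMono Subtype.val (fun _ _ h ↦ h)
      (fun a b hab ↦ ⟨⟨b, a.2.trans hab.le⟩, hab, rfl⟩) z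
  let a : {z : P // x ≤ z} := ⟨x, le_rfl⟩
  let b : {z : P // x ≤ z} := ⟨y, hxy⟩
  have hdim : coheight a ≤ height b + coheight b := by
    exact_mod_cast (coheight_le_krullDim a).trans (hx.krullDim_le_height_add_coheight b)
  have hheight : height b + w y ≤ w x :=
    height_add_le_of_strictAnti (hw.comp_strictMono (f := Subtype.val) fun _ _ h ↦ h)
      (a := a) (fun z ↦ z.2) b
  calc coheight x + w y = coheight a + w y := by rw [hcoheight]
    _ ≤ height b + coheight b + w y := by gcongr
    _ = (height b + w y) + coheight y := by rw [hcoheight]; ring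
    _ ≤ w x + coheight y := by gcongr

namespace Hat

lemma exists_toHat_eq {P : Type*} {p : Hat P} (hbot : p ≠ ⊥) (htop : p ≠ ⊤) :
    ∃ x : P, toHat x = p := by
  obtain ⟨a, rfl⟩ := WithBot.ne_bot_iff_exists.1 hbot
  have ha : a ≠ ⊤ := by rintro rfl; exact htop WithBot.coe_top
  obtain ⟨x, rfl⟩ := WithTop.ne_top_iff_exists.1 ha
  exact ⟨x, rfl⟩

variable {P : Type*} [PartialOrder P]

lemma toHat_strictMono : StrictMono (toHat : P → Hat P) :=
  WithBot.coe_strictMono.comp WithTop.coe_strictMono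

lemma toHat_le_toHat {x y : P} : toHat x ≤ toHat y ↔ x ≤ y := by
  simp [toHat]

lemma depthN_toHat [Finite P] (x : P) : (depthN (toHat x) : ℕ∞) = coheight x + 1 := by
  simp [depthN_eq_coheight, toHat]

lemma depthN_top [Finite P] : depthN (⊤ : Hat P) = 0 := by
  exact_mod_cast (depthN_eq_coheight (⊤ : Hat P)).trans (coheight_top _)

end Hat

lemma memT_depthN {P : Type*} [PartialOrder P] [Finite P] : memT P depthN :=
  ⟨Hat.depthN_top, fun p q h ↦ by
    have := coheight_add_one_le h
    rw [← depthN_eq_coheight, ← depthN_eq_coheight] at this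
    exact_mod_cast this⟩

namespace memT

variable {P : Type*} [PartialOrder P] {v : Hat P → ℕ}

lemma strictAnti (hv : memT P v) : StrictAnti v := fun p q h ↦ hv.2 p q h

lemma depthN_le [Finite P] (hv : memT P v) (p : Hat P) : depthN p ≤ v p := by
  exact_mod_cast (depthN_eq_coheight p).trans_le (coheight_le_of_strictAnti hv.strictAnti p)

lemma add_depthN_le [Finite P] (hP : ∀ x : P, IsPure {y : P // x ≤ y}) (hv : memT P v)
    {p q : Hat P} (hpq : p ≤ q) (hp : p ≠ ⊥) : v q + depthN p ≤ v p + depthN q := by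
  obtain rfl | hq := eq_or_ne q ⊤
  · have := hv.depthN_le p
    rw [hv.1, Hat.depthN_top]
    omega
  obtain ⟨x, rfl⟩ := Hat.exists_toHat_eq hp (ne_top_of_le_ne_top hq hpq)
  obtain ⟨y, rfl⟩ := Hat.exists_toHat_eq (ne_bot_of_le_ne_bot hp hpq) hq
  have key := coheight_add_le_of_isPure (hP x) (Hat.toHat_le_toHat.1 hpq)
    (hv.strictAnti.comp_strictMono Hat.toHat_strictMono)
  suffices ((v (toHat y) + depthN (toHat x) : ℕ) : ℕ∞) ≤
      (v (toHat x) + depthN (toHat y) : ℕ) by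
    exact_mod_cast this
  push_cast [Hat.depthN_toHat]
  calc (v (toHat y) : ℕ∞) + (coheight x + 1) = coheight x + v (toHat y) + 1 := by ring
    _ ≤ v (toHat x) + coheight y + 1 := add_le_add key le_rfl
    _ = v (toHat x) + (coheight y + 1) := by ring

lemma max_sub {d : Hat P → ℕ} (hd : memT P d) (hv : memT P v) (c : ℕ) :
    memT P fun p ↦ max (d p) (v p - c) := by
  refine ⟨by simp [hd.1, hv.1], fun p q hpq ↦ ?_⟩
  have := hd.2 p q hpq
  have := hv.2 p q hpq
  dsimp only
  omega

end memT

lemma tge_max_sub {P : Type*} [PartialOrder P] {d v : Hat P → ℕ} (hdv : ∀ p, d p ≤ v p)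
    (hvd : ∀ p q, p ≤ q → p ≠ ⊥ → v q + d p ≤ v p + d q) :
    Tge P v fun p ↦ max (d p) (v p - (v ⊥ - d ⊥)) := by
  refine ⟨fun p ↦ max_le (hdv p) (Nat.sub_le _ _), fun p q hpq ↦ ?_⟩
  dsimp only
  have := hdv p
  have := hdv q
  have := hdv ⊥
  obtain rfl | hp := eq_or_ne p ⊥
  · omega
  · have := hvd p q hpq hp
    omega

/-- **Miyazaki's sufficient condition for levelness.** Suppose that for every
`x ∈ P` the subposet `{y ∈ P : y ≥ x}` is pure. Then for every `v ∈ T(P)` there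
exists `v₀ ∈ T(P)` with `v₀(-∞) = rank (Hat P)` and `v ≥ v₀` in `T(P)`;
consequently every minimal element `v` of `T(P)` satisfies
`v(-∞) = rank (Hat P)`. -/
theorem miyazaki_level (P : Type*) [Fintype P] [PartialOrder P]
    (h : ∀ x : P, IsPure {y : P // x ≤ y}) :
    (∀ v : Hat P → ℕ, memT P v →
        ∃ v₀ : Hat P → ℕ, memT P v₀ ∧ v₀ ⊥ = rankN (Hat P) ∧ Tge P v v₀) ∧
      ∀ v : Hat P → ℕ, IsMinT P v → v ⊥ = rankN (Hat P) := by
  have hexists (v : Hat P → ℕ) (hv : memT P v) :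
      ∃ v₀ : Hat P → ℕ, memT P v₀ ∧ v₀ ⊥ = rankN (Hat P) ∧ Tge P v v₀ := by
    refine ⟨_, memT_depthN.max_sub hv (v ⊥ - depthN ⊥), ?_,
      tge_max_sub hv.depthN_le fun p q ↦ hv.add_depthN_le h⟩
    have := hv.depthN_le ⊥
    rw [rankN_eq_depthN_bot]
    omega
  refine ⟨hexists, fun v hv ↦ ?_⟩
  obtain ⟨v₀, hv₀, hv₀_bot, hvv₀⟩ := hexists v hv.1
  rw [← hv.2 v₀ hv₀ hvv₀, hv₀_bot]
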